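/- For x in [-1,1] and n >= 1, |Q_n(x)| = 1 if and only if x = 1, or x = -1, or R_{n-1}(x) = 0, where Q_n and R_{n-1} are as defined by the Chebyshev closed forms Q_n(z) = (1/sqrt(a^2+1))( -(az+i)T_{n-1}(z) + sqrt(a^2+1)(1-z^2)U_{n-2}(z) ) and R_{n-1}(z) = (1/sqrt(a^2+1))( sqrt(a^2+1) z U_{n-2}(z) + a T_{n-1}(z) ). -/

import Mathlib

/-!
The Pell identity `T_m(x)² + (1 - x²) U_{m-1}(x)² = 1` holds for every `x`. With
`s = √(a² + 1)` it turns `s² |Q_n(x)|²` into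
`s² + (x² - 1) (s x U_{n-2}(x) + a T_{n-1}(x))²`, so `|Q_n(x)| = 1` exactly when `x² = 1`
or `R_{n-1}(x) = 0`.
-/

namespace Polynomial.Chebyshev

variable (R : Type*) [CommRing R]

theorem U_sq_sub_two_mul_X_mul_U_mul_U_add_U_sq (n : ℤ) :
    U R n ^ 2 - 2 * X * U R n * U R (n - 1) + U R (n - 1) ^ 2 = 1 := by
  induction n using Int.induction_on with
  | zero => simp
  | succ n ih =>
    linear_combination (norm := ring_nf) ih + (U R (n + 1) - U R (n - 1)) * U_add_one R n
  | pred n ih =>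
    linear_combination (norm := ring_nf) ih + (U R (-n - 2) - U R (-n)) * U_sub_one R (-n - 1)

theorem T_sq_add_one_sub_X_sq_mul_U_sq (n : ℤ) :
    T R n ^ 2 + (1 - X ^ 2) * U R (n - 1) ^ 2 = 1 := by
  linear_combination (norm := ring_nf) U_sq_sub_two_mul_X_mul_U_mul_U_add_U_sq R n
    + (T R n + U R n - X * U R (n - 1)) * T_eq_U_sub_X_mul_U R n

theorem T_eval_sq_add_one_sub_sq_mul_U_eval_sq (n : ℤ) (x : R) :
    (T R n).eval x ^ 2 + (1 - x ^ 2) * (U R (n - 1)).eval x ^ 2 = 1 := by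
  simpa using congrArg (eval x) (T_sq_add_one_sub_X_sq_mul_U_sq R n)

theorem T_complex_eval_ofReal (n : ℤ) (x : ℝ) :
    (T ℂ n).eval (x : ℂ) = (((T ℝ n).eval x : ℝ) : ℂ) :=
  (algebraMap_eval_T x n).symm

theorem U_complex_eval_ofReal (n : ℤ) (x : ℝ) :
    (U ℂ n).eval (x : ℂ) = (((U ℝ n).eval x : ℝ) : ℂ) :=
  (algebraMap_eval_U x n).symm

end Polynomial.Chebyshev

open Complex in
theorem normSq_eq_sq_add_sub_one_mul_sq {a s x t u : ℝ} (hs : s ^ 2 = a ^ 2 + 1)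
    (hpell : t ^ 2 + (1 - x ^ 2) * u ^ 2 = 1) :
    normSq (-((a : ℂ) * x + I) * t + s * (1 - (x : ℂ) ^ 2) * u) =
      s ^ 2 + (x ^ 2 - 1) * (s * x * u + a * t) ^ 2 := by
  have hw : -((a : ℂ) * x + I) * t + s * (1 - (x : ℂ) ^ 2) * u =
      ((s * (1 - x ^ 2) * u - a * x * t : ℝ) : ℂ) + ((-t : ℝ) : ℂ) * I := by
    push_cast; ring
  rw [hw, normSq_add_mul_I]
  linear_combination (a ^ 2 + 1) * hpell + ((1 - x ^ 2) * u ^ 2 - 1) * hs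

theorem norm_one_div_mul_eq_one_iff {s : ℝ} (hs : 0 < s) (w : ℂ) :
    ‖(1 / (s : ℂ)) * w‖ = 1 ↔ Complex.normSq w = s ^ 2 := by
  rw [← Complex.sq_norm, norm_mul, norm_div, norm_one, Complex.norm_real,
    Real.norm_of_nonneg hs.le, one_div_mul_eq_div, div_eq_one_iff_eq hs.ne',
    pow_left_inj₀ (norm_nonneg w) hs.le two_ne_zero]

open Polynomial.Chebyshev in
theorem stmt4_general (a : ℝ) (n : ℕ) (x : ℝ) :
    ‖(1 / (Real.sqrt (a ^ 2 + 1) : ℂ)) *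
        (-((a : ℂ) * (x : ℂ) + Complex.I) *
            (Polynomial.Chebyshev.T ℂ ((n : ℤ) - 1)).eval (x : ℂ) +
          (Real.sqrt (a ^ 2 + 1) : ℂ) * (1 - (x : ℂ) ^ 2) *
            (Polynomial.Chebyshev.U ℂ ((n : ℤ) - 2)).eval (x : ℂ))‖ = 1 ↔
      x = 1 ∨ x = -1 ∨
        (1 / Real.sqrt (a ^ 2 + 1)) *
          (Real.sqrt (a ^ 2 + 1) * x * (Polynomial.Chebyshev.U ℝ ((n : ℤ) - 2)).eval x +
            a * (Polynomial.Chebyshev.T ℝ ((n : ℤ) - 1)).eval x) = 0 := by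
  have hs : 0 < Real.sqrt (a ^ 2 + 1) := Real.sqrt_pos.mpr (by positivity)
  have hs2 : Real.sqrt (a ^ 2 + 1) ^ 2 = a ^ 2 + 1 := Real.sq_sqrt (by positivity)
  have hpell := T_eval_sq_add_one_sub_sq_mul_U_eval_sq ℝ ((n : ℤ) - 1) x
  rw [sub_sub, one_add_one_eq_two] at hpell
  rw [T_complex_eval_ofReal, U_complex_eval_ofReal, norm_one_div_mul_eq_one_iff hs,
    normSq_eq_sq_add_sub_one_mul_sq hs2 hpell, add_eq_left, mul_eq_zero, sub_eq_zero,
    sq_eq_one_iff, pow_eq_zero_iff two_ne_zero, mul_eq_zero, or_iff_right (one_div_ne_zero hs.ne'),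
    or_assoc]

/-- On `[-1,1]`, `|Q_n(x)| = 1` iff `x = 1`, `x = -1`, or `R_{n-1}(x) = 0`. -/
theorem stmt4 (a : ℝ) (ha : a ≠ 0) (n : ℕ) (hn : 1 ≤ n) (x : ℝ)
    (hx : x ∈ Set.Icc (-1 : ℝ) 1) :
    ‖(1 / (Real.sqrt (a ^ 2 + 1) : ℂ)) *
        (-((a : ℂ) * (x : ℂ) + Complex.I) *
            (Polynomial.Chebyshev.T ℂ ((n : ℤ) - 1)).eval (x : ℂ) +
          (Real.sqrt (a ^ 2 + 1) : ℂ) * (1 - (x : ℂ) ^ 2) *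
            (Polynomial.Chebyshev.U ℂ ((n : ℤ) - 2)).eval (x : ℂ))‖ = 1 ↔
      x = 1 ∨ x = -1 ∨
        (1 / Real.sqrt (a ^ 2 + 1)) *
          (Real.sqrt (a ^ 2 + 1) * x * (Polynomial.Chebyshev.U ℝ ((n : ℤ) - 2)).eval x +
            a * (Polynomial.Chebyshev.T ℝ ((n : ℤ) - 1)).eval x) = 0 :=
  stmt4_general a n x
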